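/- Let H₁ ↪ H₀ be a compact Hilbert–Schmidt embedding of Hilbert spaces (singular values in ℓ²). Then for 0 ≤ θ₁ < θ₂ ≤ 1 the embedding of the interpolation space [H₀,H₁]_{θ₂} into [H₀,H₁]_{θ₁} belongs to the Schatten class of order 2/(θ₂−θ₁). -/

import Mathlib

open scoped InnerProductSpace

noncomputable section

variable {H : Type*} [NormedAddCommGroup H] [InnerProductSpace ℂ H] [CompleteSpace H]

/-- Membership in the spectrally defined interpolation space `[H₀, H₁]_θ`. -/
def interpMem (φ : HilbertBasis ℕ ℂ H) (s : ℕ → ℝ) (θ : ℝ) (u : H) : Prop :=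
  Summable fun n => s n ^ (2 * (1 - θ)) * ‖φ.repr u n‖ ^ 2

/-- The norm of the interpolation space `[H₀, H₁]_θ`. -/
def interpNorm (φ : HilbertBasis ℕ ℂ H) (s : ℕ → ℝ) (θ : ℝ) (u : H) : ℝ :=
  Real.sqrt (∑' n, s n ^ (2 * (1 - θ)) * ‖φ.repr u n‖ ^ 2)

/-- The inner product of the interpolation space `[H₀, H₁]_θ`. -/
def interpInner (φ : HilbertBasis ℕ ℂ H) (s : ℕ → ℝ) (θ : ℝ) (u v : H) : ℂ :=
  ∑' n, ((s n ^ (2 * (1 - θ)) : ℝ) : ℂ) *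
    (starRingEnd ℂ) (φ.repr u n) * φ.repr v n

/-- The `n`-th singular value (min-max characterization) of the embedding of
the interpolation space `[H₀, H₁]_{θ₂}` into `[H₀, H₁]_{θ₁}`, defined
spectrally via the eigenpairs `(sₙ, φₙ)` of `(E*E)^{1/2}` for the embedding
`E : H₁ → H₀`. -/
def interpEmbSingVal (φ : HilbertBasis ℕ ℂ H) (s : ℕ → ℝ) (θ₁ θ₂ : ℝ) (n : ℕ) : ℝ :=
  ⨅ F : {F : Submodule ℂ H // Module.finrank ℂ F ≤ n},
    ⨆ u : {u : H // interpMem φ s θ₂ u ∧ interpNorm φ s θ₂ u = 1 ∧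
        ∀ v ∈ (F : Submodule ℂ H), interpInner φ s θ₂ v u = 0},
      interpNorm φ s θ₁ (u : H)

/-
The spectral interpolation norms are weighted `ℓ²` norms of the coefficients in the
eigenbasis `φ`, with weights `sₘ^{2(1-θ)}`. A unit vector of `[H₀,H₁]_{θ₂}` that is orthogonal to
`φ₀, …, φₙ₋₁` only has coefficients with `m ≥ n`, where the weight ratio `sₘ^{2(θ₂-θ₁)}` is at most
`sₙ^{2(θ₂-θ₁)}`. So the `n`-th singular value is at most `sₙ^{θ₂-θ₁}`, and its `2/(θ₂-θ₁)`-th power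
is at most `sₙ²`, which is summable.
-/

omit [CompleteSpace H] in
theorem interpInner_basis_left (φ : HilbertBasis ℕ ℂ H) (s : ℕ → ℝ) (θ : ℝ) (k : ℕ) (u : H) :
    interpInner φ s θ (φ k) u = ((s k ^ (2 * (1 - θ)) : ℝ) : ℂ) * φ.repr u k := by
  rw [interpInner, tsum_eq_single k]
  · simp [φ.repr_self]
  · intro m hm
    simp [φ.repr_self, Pi.single_eq_of_ne hm]

omit [CompleteSpace H] in
theorem repr_eq_zero_of_interpInner_basis_eq_zero {φ : HilbertBasis ℕ ℂ H} {s : ℕ → ℝ}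
    (hpos : ∀ n, 0 < s n) {θ : ℝ} {k : ℕ} {u : H} (h : interpInner φ s θ (φ k) u = 0) :
    φ.repr u k = 0 := by
  rw [interpInner_basis_left] at h
  have hweight : ((s k ^ (2 * (1 - θ)) : ℝ) : ℂ) ≠ 0 := by
    exact_mod_cast (Real.rpow_pos_of_pos (hpos k) _).ne'
  exact (mul_eq_zero.mp h).resolve_left hweight

omit [CompleteSpace H] in
theorem interpNorm_le_of_repr_eq_zero {φ : HilbertBasis ℕ ℂ H} {s : ℕ → ℝ}
    (hpos : ∀ n, 0 < s n) (hanti : Antitone s) {θ₁ θ₂ : ℝ} (h₁₂ : θ₁ ≤ θ₂) {n : ℕ} {u : H}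
    (hu : interpMem φ s θ₂ u) (hrepr : ∀ k < n, φ.repr u k = 0) :
    interpNorm φ s θ₁ u ≤ s n ^ (θ₂ - θ₁) * interpNorm φ s θ₂ u := by
  set c := s n ^ (θ₂ - θ₁)
  have hc : 0 ≤ c := Real.rpow_nonneg (hpos n).le _
  have hterm : ∀ m, 0 ≤ s m ^ (2 * (1 - θ₁)) * ‖φ.repr u m‖ ^ 2 := fun m =>
    mul_nonneg (Real.rpow_nonneg (hpos m).le _) (sq_nonneg _)
  have hbound : ∀ m, s m ^ (2 * (1 - θ₁)) * ‖φ.repr u m‖ ^ 2 ≤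
      c ^ 2 * (s m ^ (2 * (1 - θ₂)) * ‖φ.repr u m‖ ^ 2) := by
    intro m
    rcases lt_or_ge m n with hm | hm
    · simp [hrepr m hm]
    · have hsplit : s m ^ (2 * (1 - θ₁)) = (s m ^ (θ₂ - θ₁)) ^ 2 * s m ^ (2 * (1 - θ₂)) := by
        rw [← Real.rpow_natCast, ← Real.rpow_mul (hpos m).le, ← Real.rpow_add (hpos m)]
        ring_nf
      have hmono : s m ^ (θ₂ - θ₁) ≤ c :=
        Real.rpow_le_rpow (hpos m).le (hanti hm) (sub_nonneg.mpr h₁₂)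
      rw [hsplit, mul_assoc]
      gcongr
      · exact mul_nonneg (Real.rpow_nonneg (hpos m).le _) (sq_nonneg _)
      · exact Real.rpow_nonneg (hpos m).le _
  calc interpNorm φ s θ₁ u
      ≤ Real.sqrt (c ^ 2 * ∑' m, s m ^ (2 * (1 - θ₂)) * ‖φ.repr u m‖ ^ 2) := by
        rw [interpNorm, ← tsum_mul_left]
        exact Real.sqrt_le_sqrt
          ((Summable.of_nonneg_of_le hterm hbound (hu.mul_left _)).tsum_le_tsum hbound
            (hu.mul_left _))
    _ = c * interpNorm φ s θ₂ u := by
        rw [interpNorm, Real.sqrt_mul (sq_nonneg c), Real.sqrt_sq hc]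

omit [CompleteSpace H] in
theorem interpEmbSingVal_nonneg (φ : HilbertBasis ℕ ℂ H) (s : ℕ → ℝ) (θ₁ θ₂ : ℝ) (n : ℕ) :
    0 ≤ interpEmbSingVal φ s θ₁ θ₂ n :=
  have : Nonempty {F : Submodule ℂ H // Module.finrank ℂ F ≤ n} := ⟨⟨⊥, by simp⟩⟩
  le_ciInf fun _ => Real.iSup_nonneg fun _ => Real.sqrt_nonneg _

omit [CompleteSpace H] in
/-- Witnessed by the subspace spanned by `φ₀, …, φₙ₋₁`. -/
theorem interpEmbSingVal_le {φ : HilbertBasis ℕ ℂ H} {s : ℕ → ℝ}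
    (hpos : ∀ n, 0 < s n) (hanti : Antitone s) {θ₁ θ₂ : ℝ} (h₁₂ : θ₁ ≤ θ₂) (n : ℕ) :
    interpEmbSingVal φ s θ₁ θ₂ n ≤ s n ^ (θ₂ - θ₁) := by
  set F : Submodule ℂ H := Submodule.span ℂ (Set.range fun i : Fin n => φ i)
  have hF : Module.finrank ℂ F ≤ n := (finrank_range_le_card _).trans (by simp)
  have hbdd : BddBelow (Set.range fun F : {F : Submodule ℂ H // Module.finrank ℂ F ≤ n} =>
      ⨆ u : {u : H // interpMem φ s θ₂ u ∧ interpNorm φ s θ₂ u = 1 ∧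
        ∀ v ∈ (F : Submodule ℂ H), interpInner φ s θ₂ v u = 0}, interpNorm φ s θ₁ (u : H)) :=
    ⟨0, by
      rintro _ ⟨F, rfl⟩
      exact Real.iSup_nonneg fun _ => Real.sqrt_nonneg _⟩
  refine ciInf_le_of_le hbdd ⟨F, hF⟩ (Real.iSup_le ?_ (Real.rpow_nonneg (hpos n).le _))
  rintro ⟨u, hmem, hnorm, horth⟩
  have hrepr : ∀ k < n, φ.repr u k = 0 := fun k hk =>
    repr_eq_zero_of_interpInner_basis_eq_zero hpos
      (horth (φ k) (Submodule.subset_span ⟨⟨k, hk⟩, rfl⟩))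
  simpa [hnorm] using interpNorm_le_of_repr_eq_zero hpos hanti h₁₂ hmem hrepr

theorem stmt_13_general (φ : HilbertBasis ℕ ℂ H) (s : ℕ → ℝ)
    (hpos : ∀ n, 0 < s n) (hanti : Antitone s)
    (hHS : Summable fun n => s n ^ 2)
    (θ₁ θ₂ : ℝ) (h₁₂ : θ₁ < θ₂) :
    Summable fun n =>
      interpEmbSingVal φ s θ₁ θ₂ n ^ (2 / (θ₂ - θ₁)) := by
  have hd : θ₂ - θ₁ ≠ 0 := (sub_pos.mpr h₁₂).ne'
  refine Summable.of_nonneg_of_le (fun n => Real.rpow_nonneg (interpEmbSingVal_nonneg ..) _)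
    (fun n => ?_) hHS
  calc interpEmbSingVal φ s θ₁ θ₂ n ^ (2 / (θ₂ - θ₁))
      ≤ (s n ^ (θ₂ - θ₁)) ^ (2 / (θ₂ - θ₁)) :=
        Real.rpow_le_rpow (interpEmbSingVal_nonneg ..) (interpEmbSingVal_le hpos hanti h₁₂.le n)
          (div_nonneg zero_le_two (sub_pos.mpr h₁₂).le)
    _ = s n ^ 2 := by
        rw [← Real.rpow_mul (hpos n).le, mul_div_cancel₀ _ hd]
        exact Real.rpow_two _

/-- If the embedding `H₁ ↪ H₀` is Hilbert–Schmidt (its singular values `sₙ`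
are `ℓ²`-summable), then for `0 ≤ θ₁ < θ₂ ≤ 1` the embedding of the
interpolation space `[H₀, H₁]_{θ₂}` into `[H₀, H₁]_{θ₁}` belongs to the
Schatten class of order `2/(θ₂ − θ₁)`: its singular values are
`ℓ^{2/(θ₂-θ₁)}`-summable. -/
theorem stmt_13 (φ : HilbertBasis ℕ ℂ H) (s : ℕ → ℝ)
    (hpos : ∀ n, 0 < s n) (hanti : Antitone s)
    (hHS : Summable fun n => s n ^ 2)
    (θ₁ θ₂ : ℝ) (h₁ : 0 ≤ θ₁) (h₁₂ : θ₁ < θ₂) (h₂ : θ₂ ≤ 1) :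
    Summable fun n =>
      interpEmbSingVal φ s θ₁ θ₂ n ^ (2 / (θ₂ - θ₁)) :=
  stmt_13_general φ s hpos hanti hHS θ₁ θ₂ h₁₂

end
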